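/- arXiv:2110.10672 — 7 statements merged into one kernel-verified Lean document; each statement's English description precedes it below -/
import Mathlib

section
/- If α_0 + Σ_{k=1}^n Σ_{i∈V} α^k_i · y^k_i ≥ 0 holds for all x ∈ R_+^Ω under the substitution y^k_i = Σ_{|S|=k, i∈S} x_S, then α_0 ≥ 0 and for each fixed k the inequality Σ_{i∈V} α^k_i · y^k_i ≥ 0 is itself valid for all x ∈ R_+^Ω. -/
open Finset

/-- y^k_i = Σ_{S ⊆ V, |S|=k, i∈S} x_S -/
def yk (n k : ℕ) (i : Fin n) (x : Finset (Fin n) → ℝ) : ℝ :=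
  ∑ S ∈ Finset.univ.filter (fun S : Finset (Fin n) => S.card = k ∧ i ∈ S), x S

lemma yk_restrict (n k k' : ℕ) (i : Fin n) (x : Finset (Fin n) → ℝ) (t : ℝ) :
    yk n k' i (fun S => t * (if S.card = k then x S else 0)) =
      if k' = k then t * yk n k i x else 0 := by
  unfold yk
  split_ifs with h
  · subst h
    rw [Finset.mul_sum]
    apply Finset.sum_congr rfl
    intro S hS
    simp only [mem_filter] at hS
    simp only []
    rw [if_pos hS.2.1]
  · apply Finset.sum_eq_zero
    intro S hS
    simp only [mem_filter] at hS
    rw [if_neg (by rw [hS.2.1]; exact h), mul_zero]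

theorem valid_decomposes (n : ℕ) (α₀ : ℝ) (α : ℕ → Fin n → ℝ)
    (hvalid : ∀ x : Finset (Fin n) → ℝ, (∀ S : Finset (Fin n), 0 ≤ x S) →
        0 ≤ α₀ + ∑ k ∈ Finset.Icc 1 n, ∑ i : Fin n, α k i * yk n k i x) :
    0 ≤ α₀ ∧
      ∀ k ∈ Finset.Icc 1 n,
        ∀ x : Finset (Fin n) → ℝ, (∀ S : Finset (Fin n), 0 ≤ x S) →
          0 ≤ ∑ i : Fin n, α k i * yk n k i x := by
  have h0 : 0 ≤ α₀ := by
    have := hvalid (fun _ => 0) (fun _ => le_refl 0)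
    simpa [yk] using this
  refine ⟨h0, ?_⟩
  intro k hk x hx
  set d := ∑ i : Fin n, α k i * yk n k i x with hd
  have key : ∀ t : ℝ, 0 ≤ t → 0 ≤ α₀ + t * d := by
    intro t ht
    have := hvalid (fun S => t * (if S.card = k then x S else 0))
      (fun S => mul_nonneg ht (by split_ifs; exacts [hx S, le_refl 0]))
    have heq : ∑ k' ∈ Finset.Icc 1 n, ∑ i : Fin n,
        α k' i * yk n k' i (fun S => t * (if S.card = k then x S else 0))
        = t * d := by
      rw [hd, Finset.mul_sum]
      rw [Finset.sum_eq_single k]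
      · apply Finset.sum_congr rfl
        intro i _
        rw [yk_restrict, if_pos rfl]; ring
      · intro k' _ hk'
        apply Finset.sum_eq_zero
        intro i _
        rw [yk_restrict, if_neg hk', mul_zero]
      · intro h; exact absurd hk h
    rw [heq] at this
    exact this
  by_contra hneg
  push_neg at hneg
  have hdpos : 0 < -d := by linarith
  have ht : 0 ≤ (α₀ + 1) / (-d) := by positivity
  have h2 := key _ ht
  have h3 : (α₀ + 1) / (-d) * d = -(α₀ + 1) := by
    field_simp
    rw [div_self hneg.ne]
  linarith
end

section
/- Suppose α_1 ≤ α_2 ≤ ... ≤ α_n are reals such that Σ_{i∈S} α_i ≥ 0 for all S ⊆ {1,...,n} with |S| = k (so in particular α_1 + ... + α_k ≥ 0), and y_1 ≥ y_2 ≥ ... ≥ y_n ≥ 0 are reals satisfying −(k−1)y_1 + Σ_{i=2}^n y_i ≥ 0. Then Σ_{i=1}^n α_i y_i ≥ 0. -/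
open Finset

/-- Auxiliary ℕ-indexed version, proved by induction on `k`. -/
lemma sorted_sum_nonneg_aux : ∀ k : ℕ, 1 ≤ k → ∀ n : ℕ, k ≤ n → ∀ a y : ℕ → ℝ,
    (∀ i j, i ≤ j → j < n → a i ≤ a j) →
    (∀ S : Finset ℕ, S ⊆ Finset.range n → S.card = k → 0 ≤ ∑ i ∈ S, a i) →
    (∀ i j, i ≤ j → j < n → y j ≤ y i) →
    (∀ i, i < n → 0 ≤ y i) →
    ((k : ℝ) - 1) * y 0 ≤ ∑ i ∈ Finset.Ico 1 n, y i →
    0 ≤ ∑ i ∈ Finset.range n, a i * y i := by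
  intro k
  induction k with
  | zero => omega
  | succ m ih =>
    intro _ n hn a y ha haS hy hy0 hineq
    rcases Nat.eq_zero_or_pos m with hm0 | hm1
    · -- base case k = 1 : every single entry of a is nonnegative
      subst hm0
      apply Finset.sum_nonneg
      intro i hi
      rw [Finset.mem_range] at hi
      have h1 : 0 ≤ a i := by
        have := haS {i} (by simp [Finset.singleton_subset_iff, Finset.mem_range, hi]) (by simp)
        simpa using this
      exact mul_nonneg h1 (hy0 i hi)
    · -- inductive step, k = m + 1 with m ≥ 1
      rcases le_or_gt 0 (a 0) with ha0 | ha0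
      · -- a 0 ≥ 0 : all a i ≥ 0
        apply Finset.sum_nonneg
        intro i hi
        rw [Finset.mem_range] at hi
        exact mul_nonneg (le_trans ha0 (ha 0 i (Nat.zero_le _) hi)) (hy0 i hi)
      · -- a 0 < 0
        have hn2 : 2 ≤ n := by omega
        set c : ℝ := a 0 / m with hc
        have hmR : (1 : ℝ) ≤ (m : ℝ) := by exact_mod_cast hm1
        have hcneg : c < 0 := div_neg_of_neg_of_pos ha0 (by linarith)
        have hmc : (m : ℝ) * c = a 0 := by
          rw [hc]; field_simp [show (m : ℝ) ≠ 0 by linarith]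
        -- apply ih to shifted sequences
        have key := ih hm1 (n - 1) (by omega)
          (fun i => a (i + 1) + c) (fun i => y (i + 1))
          (by intro i j hij hj
              show a (i+1) + c ≤ a (j+1) + c
              have := ha (i+1) (j+1) (by omega) (by omega); linarith)
          ?_ (by intro i j hij hj; exact hy (i+1) (j+1) (by omega) (by omega))
          (by intro i hi; exact hy0 (i+1) (by omega)) ?_
        · -- conclude from key
          have key' : 0 ≤ ∑ i ∈ Finset.range (n-1), (a (i+1) + c) * y (i+1) := key
          have e1 : ∑ i ∈ Finset.Ico 1 n, (a i + c) * y i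
              = ∑ i ∈ Finset.range (n-1), (a (i+1) + c) * y (i+1) := by
            rw [Finset.sum_Ico_eq_sum_range]
            apply Finset.sum_congr rfl
            intro i _; rw [Nat.add_comm 1 i]
          rw [← e1] at key'
          clear key
          rename' key' => key
          have e2 : ∑ i ∈ Finset.range n, a i * y i
              = a 0 * y 0 + ∑ i ∈ Finset.Ico 1 n, a i * y i := by
            rw [Finset.range_eq_Ico, Finset.sum_eq_sum_Ico_succ_bot (by omega)]
          have e3 : ∑ i ∈ Finset.Ico 1 n, (a i + c) * y i
              = ∑ i ∈ Finset.Ico 1 n, a i * y i + c * ∑ i ∈ Finset.Ico 1 n, y i := by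
            rw [Finset.mul_sum, ← Finset.sum_add_distrib]
            apply Finset.sum_congr rfl
            intro i _; ring
          rw [e3] at key
          -- hineq : m * y 0 ≤ ∑ Ico 1 n y, and c < 0
          have hiq : (m : ℝ) * y 0 ≤ ∑ i ∈ Finset.Ico 1 n, y i := by
            have : ((m : ℝ) + 1 - 1) = (m : ℝ) := by ring
            calc (m : ℝ) * y 0 = ((m + 1 : ℕ) : ℝ) * y 0 - y 0 := by push_cast; ring
              _ ≤ _ := by
                have h0 : 0 ≤ y 0 := hy0 0 (by omega)
                have := hineq; push_cast at this ⊢; linarith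
          have hcs : c * (∑ i ∈ Finset.Ico 1 n, y i) ≤ c * ((m : ℝ) * y 0) :=
            mul_le_mul_of_nonpos_left hiq (le_of_lt hcneg)
          rw [e2]
          have hfin : a 0 * y 0 = c * ((m : ℝ) * y 0) := by rw [← hmc]; ring
          linarith [key, hcs]
        · -- subset sums for the shifted sequence
          intro S hS hScard
          have hT : (insert 0 (S.image (· + 1))).card = m + 1 := by
            rw [Finset.card_insert_of_notMem (by simp), Finset.card_image_of_injective _
              (add_left_injective 1), hScard]
          have hTs := haS (insert 0 (S.image (· + 1))) ?_ hT
          · have hsum : ∑ i ∈ insert 0 (S.image (· + 1)), a i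
                = a 0 + ∑ i ∈ S, a (i + 1) := by
              rw [Finset.sum_insert (by simp), Finset.sum_image (by intro x _ y _ h; simp only at h; omega)]
            rw [hsum] at hTs
            have : ∑ i ∈ S, (a (i + 1) + c) = ∑ i ∈ S, a (i + 1) + (m : ℝ) * c := by
              rw [Finset.sum_add_distrib, Finset.sum_const, hScard]
              ring
            rw [this, hmc]
            linarith
          · intro x hx
            simp only [Finset.mem_insert, Finset.mem_image] at hx
            rcases hx with rfl | ⟨w, hw, rfl⟩
            · simp; omega
            · have := hS hw
              rw [Finset.mem_range] at this ⊢
              omega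
        · -- hineq for shifted sequence
          show ((m : ℝ) - 1) * y (0 + 1) ≤ ∑ i ∈ Finset.Ico 1 (n - 1), y (i + 1)
          have e4 : ∑ i ∈ Finset.Ico 1 (n-1), y (i + 1) = ∑ i ∈ Finset.Ico 2 n, y i := by
            rw [Finset.sum_Ico_eq_sum_range, Finset.sum_Ico_eq_sum_range]
            rw [show n - 1 - 1 = n - 2 by omega]
            apply Finset.sum_congr rfl
            intro i _; congr 1; omega
          rw [e4]
          have e5 : ∑ i ∈ Finset.Ico 1 n, y i = y 1 + ∑ i ∈ Finset.Ico 2 n, y i := by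
            rw [Finset.sum_eq_sum_Ico_succ_bot (by omega)]
          have h01 : y 1 ≤ y 0 := hy 0 1 (by omega) (by omega)
          have := hineq
          rw [e5] at this
          push_cast at this ⊢
          have h0 : 0 ≤ y 1 := hy0 1 (by omega)
          nlinarith [hmR]

theorem sorted_sum_nonneg (n k : ℕ) (hk : 2 ≤ k) (hkn : k ≤ n)
    (α y : Fin n → ℝ) (hα : Monotone α)
    (hαS : ∀ S : Finset (Fin n), S.card = k → 0 ≤ ∑ i ∈ S, α i)
    (hy : Antitone y) (hy0 : ∀ i, 0 ≤ y i)
    (hineq : ((k : ℝ) - 1) * y ⟨0, by omega⟩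
        ≤ ∑ i ∈ Finset.univ.erase (⟨0, by omega⟩ : Fin n), y i) :
    0 ≤ ∑ i : Fin n, α i * y i := by
  have hn : 0 < n := by omega
  set a : ℕ → ℝ := fun i => if h : i < n then α ⟨i, h⟩ else 0 with ha_def
  set b : ℕ → ℝ := fun i => if h : i < n then y ⟨i, h⟩ else 0 with hb_def
  have ha' : ∀ (i : ℕ) (h : i < n), a i = α ⟨i, h⟩ := fun i h => by simp [ha_def, h]
  have hb' : ∀ (i : ℕ) (h : i < n), b i = y ⟨i, h⟩ := fun i h => by simp [hb_def, h]
  have main := sorted_sum_nonneg_aux k (by omega) n hkn a b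
    ?_ ?_ ?_ ?_ ?_
  · have : ∑ i : Fin n, α i * y i = ∑ i ∈ Finset.range n, a i * b i := by
      rw [← Fin.sum_univ_eq_sum_range (fun i => a i * b i) n]
      apply Finset.sum_congr rfl
      intro i _
      rw [ha' i.val i.isLt, hb' i.val i.isLt]
    rw [this]; exact main
  · intro i j hij hj
    rw [ha' i (by omega), ha' j hj]
    exact hα (by exact hij)
  · intro S hS hScard
    have hlt : ∀ m ∈ S, m < n := fun m hm => Finset.mem_range.mp (hS hm)
    have := hαS (S.attachFin hlt) (by rw [Finset.card_attachFin]; exact hScard)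
    have hsum : ∑ i ∈ S.attachFin hlt, α i = ∑ i ∈ S, a i := by
      apply Finset.sum_bij (fun (i : Fin n) _ => i.val)
      · intro i hi; rw [Finset.mem_attachFin] at hi; exact hi
      · intro i hi j hj h; exact Fin.ext h
      · intro i hi
        exact ⟨⟨i, hlt i hi⟩, by rw [Finset.mem_attachFin]; exact hi, rfl⟩
      · intro i hi; rw [ha' i.val i.isLt]
    rw [← hsum]; exact this
  · intro i j hij hj
    rw [hb' i (by omega), hb' j hj]
    exact hy (by exact hij)
  · intro i hi
    rw [hb' i hi]; exact hy0 _
  · rw [hb' 0 hn]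
    have e : ∑ i ∈ Finset.Ico 1 n, b i
        = ∑ i ∈ Finset.univ.erase (⟨0, hn⟩ : Fin n), y i := by
      have e1 : ∑ i : Fin n, y i = ∑ i ∈ Finset.range n, b i := by
        rw [← Fin.sum_univ_eq_sum_range (fun i => b i) n]
        apply Finset.sum_congr rfl
        intro i _; rw [hb' i.val i.isLt]
      have e2 : ∑ i ∈ Finset.range n, b i = b 0 + ∑ i ∈ Finset.Ico 1 n, b i := by
        rw [Finset.range_eq_Ico, Finset.sum_eq_sum_Ico_succ_bot hn]
      have e3 : ∑ i : Fin n, y i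
          = y ⟨0, hn⟩ + ∑ i ∈ Finset.univ.erase (⟨0, hn⟩ : Fin n), y i := by
        rw [← Finset.add_sum_erase _ _ (Finset.mem_univ (⟨0, hn⟩ : Fin n))]
      rw [e1, e2, hb' 0 hn] at e3
      linarith
    rw [e]
    exact hineq
end

section
/- The image of the nonnegative orthant R_+^Ω under the map x ↦ (y^k_i)_{i∈V, 1≤k≤n} with y^k_i = Σ_{|S|=k, i∈S} x_S equals the polyhedral cone U^1 = { y ∈ R^{n×n} : y^k_i ≥ 0 for all i,k, and Σ_{j≠i} y^k_j − (k−1)y^k_i ≥ 0 for all i,k }. -/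
open Finset MeasureTheory

noncomputable section PGaux

variable (n k : ℕ) (y : Fin n → ℝ)

/-- partial sums of `y`: sum of `y j` over `j < m`. -/
def PGcsum (m : ℕ) : ℝ := ∑ j ∈ univ.filter (fun j : Fin n => (j : ℕ) < m), y j

/-- interval length `T/k`. -/
def PGLv : ℝ := PGcsum n y n / k

/-- the set of indices hit by the `k` equally spaced points `u + r·L`. -/
def PGhit (u : ℝ) : Finset (Fin n) :=
  univ.filter (fun i => ∃ r < k, PGcsum n y (i : ℕ) ≤ u + r * PGLv n k y ∧
    u + r * PGLv n k y < PGcsum n y ((i : ℕ) + 1))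

variable {n k y}

lemma PGcsum_zero : PGcsum n y 0 = 0 := by simp [PGcsum]

lemma PGcsum_univ : PGcsum n y n = ∑ j, y j := by
  unfold PGcsum; congr 1; ext j; simp [j.isLt]

lemma PGcsum_succ {m : ℕ} (hm : m < n) :
    PGcsum n y (m + 1) = PGcsum n y m + y ⟨m, hm⟩ := by
  unfold PGcsum
  rw [show (univ.filter (fun j : Fin n => (j : ℕ) < m + 1))
      = insert ⟨m, hm⟩ (univ.filter (fun j : Fin n => (j : ℕ) < m)) by
    ext j
    simp only [mem_insert, mem_filter, mem_univ, true_and, Nat.lt_succ_iff]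
    constructor
    · intro h
      rcases eq_or_lt_of_le h with h | h
      · left; exact Fin.ext h
      · right; exact h
    · rintro (rfl | h)
      · exact le_rfl
      · exact h.le]
  rw [sum_insert (by simp)]
  ring

lemma PGcsum_mono (hy : ∀ j, 0 ≤ y j) : Monotone (PGcsum n y) := by
  intro a b hab
  unfold PGcsum
  apply sum_le_sum_of_subset_of_nonneg
  · intro j hj; simp only [mem_filter, mem_univ, true_and] at *; omega
  · intro j _ _; exact hy j

lemma PGcsum_location (hy : ∀ j, 0 ≤ y j) {v : ℝ} (h0 : 0 ≤ v) (hT : v < PGcsum n y n) :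
    ∃! i : Fin n, PGcsum n y i ≤ v ∧ v < PGcsum n y (i + 1) := by
  have hn : 0 < n := by
    rcases Nat.eq_zero_or_pos n with rfl | h
    · exfalso; rw [PGcsum_zero] at hT; linarith
    · exact h
  set F : Finset ℕ := (Finset.range n).filter (fun m => PGcsum n y m ≤ v) with hF
  have hFne : F.Nonempty := ⟨0, by simp [hF, PGcsum_zero, h0, hn]⟩
  set m := F.max' hFne with hm
  have hmF : m ∈ F := F.max'_mem hFne
  have hmlt : m < n := by simpa [hF] using (Finset.mem_filter.mp hmF).1
  have hmle : PGcsum n y m ≤ v := (Finset.mem_filter.mp hmF).2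
  have hnext : v < PGcsum n y (m + 1) := by
    by_contra h
    push_neg at h
    rcases Nat.lt_or_ge (m + 1) n with h1 | h1
    · have : m + 1 ∈ F := by simp [hF, h1, h]
      have := F.le_max' _ this
      omega
    · have : PGcsum n y n ≤ PGcsum n y (m + 1) := PGcsum_mono hy (by omega)
      linarith
  refine ⟨⟨m, hmlt⟩, ⟨hmle, hnext⟩, ?_⟩
  rintro j ⟨hj1, hj2⟩
  by_contra hne
  have hne' : (j : ℕ) ≠ m := fun h => hne (Fin.ext h)
  rcases Nat.lt_or_ge (j : ℕ) m with h | h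
  · have : PGcsum n y (j + 1) ≤ PGcsum n y m := PGcsum_mono hy (by omega)
    linarith
  · have : PGcsum n y (m + 1) ≤ PGcsum n y j := PGcsum_mono hy (by omega)
    linarith

lemma PGT_nonneg (hy : ∀ j, 0 ≤ y j) : 0 ≤ PGcsum n y n := by
  have := PGcsum_mono hy (Nat.zero_le n)
  rw [PGcsum_zero] at this; exact this

lemma PGL_nonneg (hk : 0 < k) (hy : ∀ j, 0 ≤ y j) : 0 ≤ PGLv n k y :=
  div_nonneg (PGT_nonneg hy) (by positivity)

lemma PGkL (hk : 0 < k) : (k : ℝ) * PGLv n k y = PGcsum n y n := by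
  have : (k : ℝ) ≠ 0 := Nat.cast_ne_zero.mpr hk.ne'
  unfold PGLv
  field_simp

lemma PGy_le_L (hk : 0 < k) (hyT : ∀ i, (k : ℝ) * y i ≤ PGcsum n y n) (i : Fin n) :
    y i ≤ PGLv n k y := by
  have h := hyT i
  rw [← PGkL hk] at h
  have : (0:ℝ) < k := Nat.cast_pos.mpr hk
  nlinarith

lemma PGpoint_mem (hk : 0 < k) (hy : ∀ j, 0 ≤ y j) {u : ℝ}
    (hu : u ∈ Set.Ico 0 (PGLv n k y)) {r : ℕ} (hr : r < k) :
    0 ≤ u + r * PGLv n k y ∧ u + r * PGLv n k y < PGcsum n y n := by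
  obtain ⟨hu0, hu1⟩ := hu
  have hL := PGL_nonneg hk hy
  constructor
  · positivity
  · have h1 : (r : ℝ) ≤ (k : ℝ) - 1 := by
      have : (r : ℝ) + 1 ≤ k := by exact_mod_cast hr
      linarith
    have h2 : (r : ℝ) * PGLv n k y ≤ ((k : ℝ) - 1) * PGLv n k y :=
      mul_le_mul_of_nonneg_right h1 hL
    have h3 := PGkL (n := n) (y := y) hk
    nlinarith

lemma PGr_unique (hk : 0 < k) (hy : ∀ j, 0 ≤ y j)
    (hyT : ∀ i, (k : ℝ) * y i ≤ PGcsum n y n) {u : ℝ}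
    (_hu : u ∈ Set.Ico 0 (PGLv n k y)) {i : Fin n} {r r' : ℕ}
    (_hr : r < k) (_hr' : r' < k)
    (h1 : PGcsum n y (i : ℕ) ≤ u + r * PGLv n k y ∧
      u + r * PGLv n k y < PGcsum n y ((i : ℕ) + 1))
    (h2 : PGcsum n y (i : ℕ) ≤ u + r' * PGLv n k y ∧
      u + r' * PGLv n k y < PGcsum n y ((i : ℕ) + 1)) :
    r = r' := by
  have hL := PGL_nonneg hk hy
  have hyl := PGy_le_L hk hyT i
  have hcs := PGcsum_succ (y := y) i.isLt
  rw [Fin.eta] at hcs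
  by_contra hne
  rcases Nat.lt_or_ge r r' with h | h
  · have : (r : ℝ) + 1 ≤ r' := by exact_mod_cast h
    have hm : ((r : ℝ) + 1) * PGLv n k y ≤ (r' : ℝ) * PGLv n k y :=
      mul_le_mul_of_nonneg_right this hL
    nlinarith [h1.1, h2.2]
  · have h' : r' < r := by omega
    have : (r' : ℝ) + 1 ≤ r := by exact_mod_cast h'
    have hm : ((r' : ℝ) + 1) * PGLv n k y ≤ (r : ℝ) * PGLv n k y :=
      mul_le_mul_of_nonneg_right this hL
    nlinarith [h2.1, h1.2]

lemma PGhit_card (hk : 0 < k) (hy : ∀ j, 0 ≤ y j)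
    (hyT : ∀ i, (k : ℝ) * y i ≤ PGcsum n y n) {u : ℝ}
    (hu : u ∈ Set.Ico 0 (PGLv n k y)) : (PGhit n k y u).card = k := by
  classical
  have loc : ∀ r, r < k → ∃! i : Fin n,
      PGcsum n y (i : ℕ) ≤ u + r * PGLv n k y ∧
        u + r * PGLv n k y < PGcsum n y ((i : ℕ) + 1) :=
    fun r hr => PGcsum_location hy (PGpoint_mem hk hy hu hr).1 (PGpoint_mem hk hy hu hr).2
  suffices h : (Finset.range k).card = (PGhit n k y u).card by simpa using h.symm
  apply Finset.card_bij
    (fun r hr => ((loc r (Finset.mem_range.mp hr)).exists).choose)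
  · intro r hr
    have hspec := ((loc r (Finset.mem_range.mp hr)).exists).choose_spec
    simp only [PGhit, mem_filter, mem_univ, true_and]
    exact ⟨r, Finset.mem_range.mp hr, hspec⟩
  · intro r hr r' hr' heq
    have hs1 := ((loc r (Finset.mem_range.mp hr)).exists).choose_spec
    have hs2 := ((loc r' (Finset.mem_range.mp hr')).exists).choose_spec
    rw [heq] at hs1
    exact PGr_unique hk hy hyT hu (Finset.mem_range.mp hr) (Finset.mem_range.mp hr') hs1 hs2
  · intro i hi
    simp only [PGhit, mem_filter, mem_univ, true_and] at hi
    obtain ⟨r, hr, hprop⟩ := hi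
    refine ⟨r, Finset.mem_range.mpr hr, ?_⟩
    exact ((loc r hr).unique ((loc r hr).exists).choose_spec hprop)

lemma PGhit_mem_set (i : Fin n) :
    {u : ℝ | i ∈ PGhit n k y u}
      = ⋃ r ∈ Finset.range k,
          Set.Ico (PGcsum n y (i : ℕ) - r * PGLv n k y)
            (PGcsum n y ((i : ℕ) + 1) - r * PGLv n k y) := by
  ext u
  simp only [PGhit, Set.mem_setOf_eq, mem_filter, mem_univ, true_and, Set.mem_iUnion,
    Set.mem_Ico, Finset.mem_range, exists_prop]
  constructor
  · rintro ⟨r, hr, h1, h2⟩; exact ⟨r, hr, by linarith, by linarith⟩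
  · rintro ⟨r, hr, h1, h2⟩; exact ⟨r, hr, by linarith, by linarith⟩

lemma PGhit_measurable (i : Fin n) : MeasurableSet {u : ℝ | i ∈ PGhit n k y u} := by
  rw [PGhit_mem_set]
  exact .biUnion (Finset.range k).countable_toSet (fun _ _ => measurableSet_Ico)

lemma PGeq_measurable (S : Finset (Fin n)) :
    MeasurableSet {u : ℝ | PGhit n k y u = S} := by
  have : {u : ℝ | PGhit n k y u = S}
      = ⋂ i : Fin n, {u : ℝ | i ∈ PGhit n k y u ↔ i ∈ S} := by
    ext u; simp [Finset.ext_iff]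
  rw [this]
  refine MeasurableSet.iInter (fun i => ?_)
  by_cases hi : i ∈ S
  · simp only [hi, iff_true]; exact PGhit_measurable i
  · simp only [hi, iff_false]
    exact (PGhit_measurable (n := n) (k := k) (y := y) i).compl

lemma PGblock_cover (L : ℝ) (k : ℕ) (v : ℝ) (h0 : 0 ≤ v) (hk : v < k * L) :
    ∃ r < k, (r : ℝ) * L ≤ v ∧ v < ((r : ℝ) + 1) * L := by
  induction k with
  | zero => simp at hk; linarith
  | succ m ih =>
    rcases lt_or_ge v ((m : ℝ) * L) with h | h
    · obtain ⟨r, hr, h1, h2⟩ := ih h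
      exact ⟨r, by omega, h1, h2⟩
    · exact ⟨m, by omega, h, by push_cast at hk ⊢; linarith⟩

lemma PGblock_disjoint {L : ℝ} (hL : 0 ≤ L) {r r' : ℕ} (h : r ≠ r') :
    Disjoint (Set.Ico ((r : ℝ) * L) (((r : ℝ) + 1) * L))
      (Set.Ico ((r' : ℝ) * L) (((r' : ℝ) + 1) * L)) := by
  rw [Set.Ico_disjoint_Ico]
  rcases Nat.lt_or_ge r r' with h' | h'
  · have : ((r : ℝ) + 1) ≤ r' := by exact_mod_cast h'
    calc min (((r:ℝ)+1)*L) (((r':ℝ)+1)*L) ≤ ((r:ℝ)+1)*L := min_le_left _ _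
      _ ≤ (r':ℝ)*L := mul_le_mul_of_nonneg_right this hL
      _ ≤ max ((r:ℝ)*L) ((r':ℝ)*L) := le_max_right _ _
  · have h'' : r' < r := by omega
    have : ((r' : ℝ) + 1) ≤ r := by exact_mod_cast h''
    calc min (((r:ℝ)+1)*L) (((r':ℝ)+1)*L) ≤ ((r':ℝ)+1)*L := min_le_right _ _
      _ ≤ (r:ℝ)*L := mul_le_mul_of_nonneg_right this hL
      _ ≤ max ((r:ℝ)*L) ((r':ℝ)*L) := le_max_left _ _

lemma PGinterval_vol {L : ℝ} (hL : 0 ≤ L) (k : ℕ) {a b : ℝ} (ha : 0 ≤ a) (hb : b ≤ k * L) :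
    ∑ r ∈ Finset.range k,
      volume (Set.Ico ((r : ℝ) * L) (((r : ℝ) + 1) * L) ∩ Set.Ico a b)
      = volume (Set.Ico a b) := by
  rw [← measure_biUnion_finset]
  · congr 1
    apply Set.Subset.antisymm
    · exact Set.iUnion₂_subset (fun r _ => Set.inter_subset_right)
    · intro v hv
      obtain ⟨hv1, hv2⟩ := hv
      obtain ⟨r, hr, h1, h2⟩ := PGblock_cover L k v (le_trans ha hv1) (lt_of_lt_of_le hv2 hb)
      exact Set.mem_biUnion (Finset.mem_range.mpr hr) ⟨⟨h1, h2⟩, hv1, hv2⟩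
  · intro r hr r' hr' hne
    exact Set.disjoint_of_subset Set.inter_subset_left Set.inter_subset_left
      (PGblock_disjoint hL hne)
  · exact fun r _ => (measurableSet_Ico.inter measurableSet_Ico)

lemma PGshift_vol (L t a b : ℝ) :
    volume (Set.Ico 0 L ∩ Set.Ico (a - t) (b - t))
      = volume (Set.Ico t (t + L) ∩ Set.Ico a b) := by
  rw [Set.Ico_inter_Ico, Set.Ico_inter_Ico, Real.volume_Ico, Real.volume_Ico]
  congr 1
  rcases le_total L (b - t) with h | h <;> rcases le_total (0:ℝ) (a - t) with h' | h' <;>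
    rcases le_total (t + L) b with h'' | h'' <;> rcases le_total t a with h''' | h''' <;>
    simp [min_def, max_def] <;> split_ifs <;> linarith

lemma PGhit_i_vol (hk : 0 < k) (hy : ∀ j, 0 ≤ y j)
    (hyT : ∀ i, (k : ℝ) * y i ≤ PGcsum n y n) (i : Fin n) :
    volume {u ∈ Set.Ico (0:ℝ) (PGLv n k y) | i ∈ PGhit n k y u}
      = ENNReal.ofReal (y i) := by
  have hL := PGL_nonneg hk hy
  have hset : {u ∈ Set.Ico (0:ℝ) (PGLv n k y) | i ∈ PGhit n k y u}
      = ⋃ r ∈ Finset.range k, (Set.Ico (0:ℝ) (PGLv n k y) ∩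
          Set.Ico (PGcsum n y (i:ℕ) - r * PGLv n k y)
            (PGcsum n y ((i:ℕ)+1) - r * PGLv n k y)) := by
    ext u
    simp only [Set.mem_setOf_eq, Set.mem_iUnion, Set.mem_inter_iff, Set.mem_Ico,
      Finset.mem_range, exists_prop, PGhit, mem_filter, mem_univ, true_and]
    constructor
    · rintro ⟨hu, r, hr, h1, h2⟩; exact ⟨r, hr, hu, by constructor <;> linarith⟩
    · rintro ⟨r, hr, hu, h1, h2⟩; exact ⟨hu, r, hr, by constructor <;> linarith⟩
  rw [hset, measure_biUnion_finset]
  · have hterm : ∀ r ∈ Finset.range k,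
        volume (Set.Ico (0:ℝ) (PGLv n k y) ∩
          Set.Ico (PGcsum n y (i:ℕ) - r * PGLv n k y)
            (PGcsum n y ((i:ℕ)+1) - r * PGLv n k y))
        = volume (Set.Ico ((r:ℝ) * PGLv n k y) (((r:ℝ)+1) * PGLv n k y) ∩
            Set.Ico (PGcsum n y (i:ℕ)) (PGcsum n y ((i:ℕ)+1))) := by
      intro r _
      have := PGshift_vol (PGLv n k y) ((r:ℝ) * PGLv n k y)
        (PGcsum n y (i:ℕ)) (PGcsum n y ((i:ℕ)+1))
      rw [this]
      congr 2
      ring_nf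
    rw [Finset.sum_congr rfl hterm]
    have ha : 0 ≤ PGcsum n y (i : ℕ) := by
      have := PGcsum_mono hy (Nat.zero_le (i : ℕ)); rw [PGcsum_zero] at this; exact this
    have hb : PGcsum n y ((i:ℕ)+1) ≤ (k : ℝ) * PGLv n k y := by
      rw [PGkL hk]; exact PGcsum_mono hy i.isLt
    rw [PGinterval_vol hL k ha hb, Real.volume_Ico, PGcsum_succ i.isLt, Fin.eta]
    congr 1; ring
  · intro r hr r' hr' hne
    simp only [Function.onFun]
    rw [Set.disjoint_left]
    rintro u ⟨hu0, hu1, hu2⟩ ⟨hu0', hu1', hu2'⟩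
    exact hne (PGr_unique hk hy hyT hu0 (Finset.mem_range.mp hr) (Finset.mem_range.mp hr')
      ⟨by linarith, by linarith⟩ ⟨by linarith, by linarith⟩)
  · exact fun r _ => measurableSet_Ico.inter measurableSet_Ico

lemma PGlevel_marginal (hk : 0 < k) (hy : ∀ j, 0 ≤ y j)
    (hyT : ∀ i, (k : ℝ) * y i ≤ PGcsum n y n) (i : Fin n) :
    ∑ S ∈ univ.filter (fun S : Finset (Fin n) => S.card = k ∧ i ∈ S),
      (volume {u ∈ Set.Ico (0:ℝ) (PGLv n k y) | PGhit n k y u = S}).toReal = y i := by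
  classical
  have hfin : ∀ S : Finset (Fin n),
      volume {u ∈ Set.Ico (0:ℝ) (PGLv n k y) | PGhit n k y u = S} ≠ ⊤ := by
    intro S
    have h1 : volume {u ∈ Set.Ico (0:ℝ) (PGLv n k y) | PGhit n k y u = S}
        ≤ volume (Set.Ico (0:ℝ) (PGLv n k y)) := measure_mono (Set.sep_subset _ _)
    exact ne_top_of_le_ne_top (by rw [Real.volume_Ico]; exact ENNReal.ofReal_ne_top) h1
  rw [← ENNReal.toReal_sum (fun S _ => hfin S)]
  have key : ∑ S ∈ univ.filter (fun S : Finset (Fin n) => S.card = k ∧ i ∈ S),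
      volume {u ∈ Set.Ico (0:ℝ) (PGLv n k y) | PGhit n k y u = S}
      = ENNReal.ofReal (y i) := by
    rw [← PGhit_i_vol hk hy hyT i, ← measure_biUnion_finset]
    · congr 1
      ext u
      simp only [Set.mem_iUnion, Set.mem_setOf_eq, mem_filter, mem_univ, true_and, exists_prop]
      constructor
      · rintro ⟨S, ⟨hc, hiS⟩, hu, rfl⟩; exact ⟨hu, hiS⟩
      · rintro ⟨hu, hiS⟩
        exact ⟨PGhit n k y u, ⟨PGhit_card hk hy hyT hu, hiS⟩, hu, rfl⟩
    · intro S hS S' hS' hne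
      simp only [Function.onFun]
      rw [Set.disjoint_left]
      rintro u ⟨hu, rfl⟩ ⟨hu', h⟩
      exact hne h
    · exact fun S _ => measurableSet_Ico.inter (PGeq_measurable S)
  rw [key, ENNReal.toReal_ofReal (hy i)]

/-- the column `y · kk` as a function of a natural-number level. -/
def PGcol (n : ℕ) (y : Fin n → Fin n → ℝ) (c : ℕ) : Fin n → ℝ :=
  fun j => if h : c < n then y j ⟨c, h⟩ else 0

/-- the witness `x`. -/
def PGx (n : ℕ) (y : Fin n → Fin n → ℝ) (S : Finset (Fin n)) : ℝ :=
  (volume {u ∈ Set.Ico (0:ℝ) (PGLv n S.card (PGcol n y (S.card - 1))) |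
    PGhit n S.card (PGcol n y (S.card - 1)) u = S}).toReal

lemma PGx_nonneg (n : ℕ) (y : Fin n → Fin n → ℝ) (S : Finset (Fin n)) : 0 ≤ PGx n y S :=
  ENNReal.toReal_nonneg

lemma PGx_eq (n : ℕ) (y : Fin n → Fin n → ℝ) {S : Finset (Fin n)} {kk : Fin n}
    (h : S.card = kk.val + 1) :
    PGx n y S = (volume {u ∈ Set.Ico (0:ℝ) (PGLv n (kk.val + 1) (fun j => y j kk)) |
      PGhit n (kk.val + 1) (fun j => y j kk) u = S}).toReal := by
  unfold PGx
  rw [h]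
  have hcol : PGcol n y (kk.val + 1 - 1) = fun j => y j kk := by
    funext j
    simp [PGcol, kk.isLt]
  rw [hcol]

end PGaux

set_option maxHeartbeats 2000000 in
/-- the image of the nonnegative orthant under the
Prékopa–Gao aggregation x ↦ (y^k_i), with y^k_i = Σ_{|S|=k, i∈S} x_S,
equals the cone U¹.  Here `y i kk` stands for y^{kk+1}_i, so that `kk`
runs over the levels k = 1,...,n and the coefficient (k-1) is `kk.val`. -/
theorem PG_image_eq_U1 (n : ℕ) :
    {y : Fin n → Fin n → ℝ |
      ∃ x : Finset (Fin n) → ℝ, (∀ S : Finset (Fin n), 0 ≤ x S) ∧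
        ∀ (i : Fin n) (kk : Fin n),
          y i kk = ∑ S ∈ Finset.univ.filter
              (fun S : Finset (Fin n) => S.card = kk.val + 1 ∧ i ∈ S), x S}
    = {y : Fin n → Fin n → ℝ |
        ∀ (i : Fin n) (kk : Fin n),
          0 ≤ y i kk ∧
            (kk.val : ℝ) * y i kk ≤ ∑ j ∈ Finset.univ.erase i, y j kk} := by
  classical
  ext y
  simp only [Set.mem_setOf_eq]
  constructor
  · -- forward: image ⊆ cone
    rintro ⟨x, hx0, hxy⟩ i kk
    constructor
    · rw [hxy i kk]
      exact Finset.sum_nonneg (fun S _ => hx0 S)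
    · have hrw : ∀ j : Fin n,
          y j kk = ∑ S ∈ Finset.univ.filter
            (fun S : Finset (Fin n) => S.card = kk.val + 1),
              (if j ∈ S then x S else 0) := by
        intro j
        rw [hxy j kk, ← Finset.sum_filter, Finset.filter_filter]
      calc (kk.val : ℝ) * y i kk
          = ∑ S ∈ Finset.univ.filter
              (fun S : Finset (Fin n) => S.card = kk.val + 1),
                (kk.val : ℝ) * (if i ∈ S then x S else 0) := by
            rw [hrw i, Finset.mul_sum]
        _ ≤ ∑ S ∈ Finset.univ.filter
              (fun S : Finset (Fin n) => S.card = kk.val + 1),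
                ((S.erase i).card : ℝ) * x S := by
            apply Finset.sum_le_sum
            intro S hS
            simp only [Finset.mem_filter, Finset.mem_univ, true_and] at hS
            by_cases hi : i ∈ S
            · rw [if_pos hi, Finset.card_erase_of_mem hi, hS]
              simp
            · rw [if_neg hi, Finset.erase_eq_of_notMem hi, hS, mul_zero]
              exact mul_nonneg (by positivity) (hx0 S)
        _ = ∑ j ∈ Finset.univ.erase i, y j kk := by
            rw [Finset.sum_congr rfl (fun j _ => hrw j), Finset.sum_comm]
            apply Finset.sum_congr rfl
            intro S hS
            rw [← Finset.sum_filter]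
            have : (Finset.univ.erase i).filter (fun j => j ∈ S) = S.erase i := by
              ext j
              simp only [Finset.mem_filter, Finset.mem_erase, Finset.mem_univ, true_and]
              tauto
            rw [this, Finset.sum_const, nsmul_eq_mul]
  · -- backward: cone ⊆ image
    intro hy
    refine ⟨PGx n y, fun S => PGx_nonneg n y S, ?_⟩
    intro i kk
    have hcol0 : ∀ j : Fin n, 0 ≤ y j kk := fun j => (hy j kk).1
    have hcolT : ∀ j : Fin n,
        ((kk.val + 1 : ℕ) : ℝ) * y j kk ≤ PGcsum n (fun j => y j kk) n := by
      intro j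
      rw [PGcsum_univ]
      have h1 := (hy j kk).2
      have h2 : y j kk + ∑ l ∈ Finset.univ.erase j, y l kk = ∑ l, y l kk :=
        Finset.add_sum_erase Finset.univ (fun l => y l kk) (Finset.mem_univ j)
      push_cast
      linarith
    have := PGlevel_marginal (n := n) (k := kk.val + 1) (y := fun j => y j kk)
      (Nat.succ_pos _) hcol0 hcolT i
    rw [← this]
    apply Finset.sum_congr rfl
    intro S hS
    simp only [Finset.mem_filter, Finset.mem_univ, true_and] at hS
    exact (PGx_eq (kk := kk) n y hS.1).symm
end

section
/- For every i ∈ V and 2 ≤ k ≤ n, Σ_{|S|=k, i∉S} x_S = (1/C(k,2)) Σ_{Q∈Ω²} y^k_Q − (1/(k−1)) Σ_{Q∈Ω², i∈Q} y^k_Q; in particular this expression is nonnegative when x ≥ 0. -/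
open Finset

/-- y^k_Q = Σ_{S ⊆ V, |S|=k, Q⊆S} x_S -/
def yQ (n k : ℕ) (Q : Finset (Fin n)) (x : Finset (Fin n) → ℝ) : ℝ :=
  ∑ S ∈ Finset.univ.filter (fun S : Finset (Fin n) => S.card = k ∧ Q ⊆ S), x S

lemma sumA (n k : ℕ) (x : Finset (Fin n) → ℝ) :
    (∑ Q ∈ Finset.univ.filter (fun Q : Finset (Fin n) => Q.card = 2), yQ n k Q x)
      = (k.choose 2 : ℝ) * ∑ S ∈ Finset.univ.filter (fun S : Finset (Fin n) => S.card = k), x S := by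
  unfold yQ
  rw [Finset.sum_comm' (s' := fun S => S.powersetCard 2)
    (t' := Finset.univ.filter (fun S : Finset (Fin n) => S.card = k))]
  · rw [Finset.mul_sum]
    refine Finset.sum_congr rfl fun S hS => ?_
    rw [Finset.sum_const, Finset.card_powersetCard, nsmul_eq_mul]
    simp only [Finset.mem_filter] at hS
    rw [hS.2]
  · intro Q S
    simp only [Finset.mem_filter, Finset.mem_univ, true_and, Finset.mem_powersetCard]
    tauto

lemma sumB (n k : ℕ) (x : Finset (Fin n) → ℝ) (i : Fin n) :
    (∑ Q ∈ Finset.univ.filter (fun Q : Finset (Fin n) => Q.card = 2 ∧ i ∈ Q), yQ n k Q x)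
      = ((k - 1 : ℕ) : ℝ) *
        ∑ S ∈ Finset.univ.filter (fun S : Finset (Fin n) => S.card = k ∧ i ∈ S), x S := by
  unfold yQ
  rw [Finset.sum_comm' (s' := fun S => Finset.univ.filter
      (fun Q : Finset (Fin n) => (Q.card = 2 ∧ i ∈ Q) ∧ Q ⊆ S))
    (t' := Finset.univ.filter (fun S : Finset (Fin n) => S.card = k ∧ i ∈ S))]
  · rw [Finset.mul_sum]
    refine Finset.sum_congr rfl fun S hS => ?_
    simp only [Finset.mem_filter] at hS
    rw [Finset.sum_const, nsmul_eq_mul]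
    congr 1
    -- card of filter = k - 1
    have : (Finset.univ.filter (fun Q : Finset (Fin n) => (Q.card = 2 ∧ i ∈ Q) ∧ Q ⊆ S)).card
        = (S.erase i).card := by
      refine (Finset.card_bij (fun (j : Fin n) _ => insert i ({j} : Finset (Fin n))) ?_ ?_ ?_).symm
      · intro j hj
        simp only [Finset.mem_erase] at hj
        simp only [Finset.mem_filter, Finset.mem_univ, true_and]
        refine ⟨⟨?_, by simp⟩, ?_⟩
        · rw [Finset.card_insert_of_notMem (by simp [Ne.symm hj.1]), Finset.card_singleton]
        · intro a ha
          simp only [Finset.mem_insert, Finset.mem_singleton] at ha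
          rcases ha with rfl | rfl
          · exact hS.2.2
          · exact hj.2
      · intro a ha b hb hab
        simp only [Finset.mem_erase] at ha hb
        have hb2 : b ∈ insert i ({a} : Finset (Fin n)) := by rw [hab]; simp
        simp only [Finset.mem_insert, Finset.mem_singleton] at hb2
        rcases hb2 with h | h
        · exact absurd h hb.1
        · exact h.symm
      · intro Q hQ
        simp only [Finset.mem_filter, Finset.mem_univ, true_and] at hQ
        obtain ⟨⟨hc, hiQ⟩, hQS⟩ := hQ
        obtain ⟨j, hj⟩ : ∃ j, Q.erase i = {j} := by
          rw [← Finset.card_eq_one, Finset.card_erase_of_mem hiQ, hc]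
        refine ⟨j, ?_, ?_⟩
        · have hjQ : j ∈ Q.erase i := by rw [hj]; simp
          simp only [Finset.mem_erase] at hjQ
          exact Finset.mem_erase.2 ⟨hjQ.1, hQS hjQ.2⟩
        · show insert i ({j} : Finset (Fin n)) = Q
          rw [← hj, Finset.insert_erase hiQ]
      
    rw [this, Finset.card_erase_of_mem hS.2.2, hS.2.1]
  · intro Q S
    simp only [Finset.mem_filter, Finset.mem_univ, true_and]
    constructor
    · rintro ⟨⟨h2, hiQ⟩, hk, hQS⟩
      exact ⟨⟨⟨h2, hiQ⟩, hQS⟩, hk, hQS hiQ⟩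
    · rintro ⟨⟨⟨h2, hiQ⟩, hQS⟩, hk, _⟩
      exact ⟨⟨h2, hiQ⟩, hk, hQS⟩

theorem avoid_i_identity (n : ℕ) (x : Finset (Fin n) → ℝ)
    (hx : ∀ S : Finset (Fin n), 0 ≤ x S) (i : Fin n) (k : ℕ)
    (hk : 2 ≤ k) (hkn : k ≤ n) :
    (∑ S ∈ Finset.univ.filter
        (fun S : Finset (Fin n) => S.card = k ∧ i ∉ S), x S)
      = (1 / ((k : ℝ) * ((k : ℝ) - 1) / 2)) *
          (∑ Q ∈ Finset.univ.filter
              (fun Q : Finset (Fin n) => Q.card = 2), yQ n k Q x)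
        - (1 / ((k : ℝ) - 1)) *
          (∑ Q ∈ Finset.univ.filter
              (fun Q : Finset (Fin n) => Q.card = 2 ∧ i ∈ Q), yQ n k Q x)
    ∧ 0 ≤ (1 / ((k : ℝ) * ((k : ℝ) - 1) / 2)) *
          (∑ Q ∈ Finset.univ.filter
              (fun Q : Finset (Fin n) => Q.card = 2), yQ n k Q x)
        - (1 / ((k : ℝ) - 1)) *
          (∑ Q ∈ Finset.univ.filter
              (fun Q : Finset (Fin n) => Q.card = 2 ∧ i ∈ Q), yQ n k Q x) := by
  have hk1 : (1 : ℝ) ≤ (k : ℝ) := by exact_mod_cast (by omega : 1 ≤ k)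
  have hkm1 : (0 : ℝ) < (k : ℝ) - 1 := by
    have : (2 : ℝ) ≤ (k : ℝ) := by exact_mod_cast hk
    linarith
  have hc2 : (0 : ℝ) < (k : ℝ) * ((k : ℝ) - 1) / 2 := by positivity
  have hchoose : ((k.choose 2 : ℕ) : ℝ) = (k : ℝ) * ((k : ℝ) - 1) / 2 := by
    rw [Nat.cast_choose_two]
  have hcast : ((k - 1 : ℕ) : ℝ) = (k : ℝ) - 1 := by
    have : 1 ≤ k := by omega
    push_cast [this]; ring
  have hA := sumA n k x
  have hB := sumB n k x i
  have hsplit : (∑ S ∈ Finset.univ.filter (fun S : Finset (Fin n) => S.card = k), x S)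
      = (∑ S ∈ Finset.univ.filter (fun S : Finset (Fin n) => S.card = k ∧ i ∈ S), x S)
        + (∑ S ∈ Finset.univ.filter (fun S : Finset (Fin n) => S.card = k ∧ i ∉ S), x S) := by
    rw [← Finset.sum_filter_add_sum_filter_not
      (Finset.univ.filter (fun S : Finset (Fin n) => S.card = k)) (fun S => i ∈ S)]
    congr 1 <;> · congr 1; ext S; simp [Finset.mem_filter, and_comm]
  have key : (1 / ((k : ℝ) * ((k : ℝ) - 1) / 2)) *
          (∑ Q ∈ Finset.univ.filter (fun Q : Finset (Fin n) => Q.card = 2), yQ n k Q x)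
        - (1 / ((k : ℝ) - 1)) *
          (∑ Q ∈ Finset.univ.filter (fun Q : Finset (Fin n) => Q.card = 2 ∧ i ∈ Q), yQ n k Q x)
      = ∑ S ∈ Finset.univ.filter (fun S : Finset (Fin n) => S.card = k ∧ i ∉ S), x S := by
    rw [hA, hB, hchoose, hcast, hsplit]
    field_simp
    ring
  refine ⟨key.symm, ?_⟩
  rw [key]
  exact Finset.sum_nonneg fun S _ => hx S
end

section
/- For every 2-element set R ⊆ V and 2 ≤ k ≤ n, Σ_{|S|=k, R∩S=∅} x_S = (1/C(k,2)) ( Σ_{Q∈Ω²} y^k_Q − (k/2) Σ_{Q∈Ω², |R∩Q|=1} y^k_Q + (k(k−3)/2) y^k_R ), where y^k_Q = Σ_{|S|=k, Q⊆S} x_S. -/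
/-!
Sort every `k`-set `S` by `t = |R ∩ S| ∈ {0, 1, 2}`. Exchanging the order of summation, each
`y^k_Q`-sum in the identity becomes `∑_S c(S) x_S`, where `c(S)` counts the pairs `Q ⊆ S` of the
relevant kind: `C(k, 2)` pairs in all, `t (k - t)` pairs meeting `R` once, and the single pair `R`
when `t = 2`. The combination `C(k, 2) - (k/2) t (k - t) + (k (k - 3)/2) [t = 2]` equals
`C(k, 2)` for `t = 0` and vanishes for `t = 1, 2`.
-/

open Finset

lemma sum_yQ_eq_sum_card_mul (n k : ℕ) (x : Finset (Fin n) → ℝ) (P : Finset (Fin n) → Prop)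
    [DecidablePred P] :
    ∑ Q ∈ univ.filter P, yQ n k Q x
      = ∑ S ∈ univ.filter (fun S : Finset (Fin n) => #S = k),
          (#{Q | P Q ∧ Q ⊆ S} : ℝ) * x S := by
  unfold yQ
  rw [sum_comm' (t' := univ.filter fun S : Finset (Fin n) => #S = k)
    (s' := fun S => univ.filter fun Q => P Q ∧ Q ⊆ S)]
  · simp only [sum_const, nsmul_eq_mul]
  · intro Q S
    simp only [mem_filter, mem_univ, true_and]
    tauto

section

variable {α : Type*} [DecidableEq α]

lemma inter_pair_eq_singleton {R : Finset α} {a b : α} (ha : a ∈ R) (hb : b ∉ R) :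
    R ∩ {a, b} = {a} := by
  ext z; simp only [mem_inter, mem_insert, mem_singleton]; grind

lemma pair_sdiff_eq_singleton {R : Finset α} {a b : α} (ha : a ∈ R) (hb : b ∉ R) :
    {a, b} \ R = {b} := by
  ext z; simp only [mem_sdiff, mem_insert, mem_singleton]; grind

lemma weighted_counts_eq_ite_inter_eq_empty {R S : Finset α} (hR : #R = 2) {k : ℕ} (hS : #S = k)
    (hk : 2 ≤ k) (x : ℝ) :
    1 / ((k : ℝ) * ((k : ℝ) - 1) / 2) *
        ((k.choose 2 : ℝ) * x - (k : ℝ) / 2 * ((#(R ∩ S) * #(S \ R) : ℕ) * x)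
          + (k : ℝ) * ((k : ℝ) - 3) / 2 * (if R ⊆ S then x else 0))
      = if R ∩ S = ∅ then x else 0 := by
  have hsub : R ⊆ S ↔ #(R ∩ S) = 2 := by
    rw [← inter_eq_left]
    refine ⟨fun h => by rw [h, hR], fun h => ?_⟩
    exact eq_of_subset_of_card_le inter_subset_left (by rw [h, hR])
  have hdisj : R ∩ S = ∅ ↔ #(R ∩ S) = 0 := card_eq_zero.symm
  have hsdiff : #(S \ R) = k - #(R ∩ S) := by rw [card_sdiff, hS]
  have hle : #(R ∩ S) ≤ 2 := hR ▸ card_le_card inter_subset_left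
  have hk1 : (k : ℝ) - 1 ≠ 0 := sub_ne_zero.mpr (by exact_mod_cast (by omega : k ≠ 1))
  rw [Nat.cast_choose_two, hsdiff]
  simp only [hsub, hdisj]
  generalize #(R ∩ S) = t at hle ⊢
  interval_cases t <;> simp only [Nat.reduceEqDiff, ↓reduceIte] <;>
    push_cast [Nat.cast_sub hk, Nat.cast_sub (by omega : 1 ≤ k)] <;> field_simp <;> ring

variable [Fintype α]

lemma card_filter_card_eq_two_subset (S : Finset α) :
    #{Q : Finset α | #Q = 2 ∧ Q ⊆ S} = (#S).choose 2 := by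
  rw [← card_powersetCard]
  congr 1
  ext Q
  simp [mem_powersetCard, and_comm]

lemma card_filter_pair_inter_card_eq_one_subset (R S : Finset α) :
    #{Q : Finset α | (#Q = 2 ∧ #(R ∩ Q) = 1) ∧ Q ⊆ S} = #(R ∩ S) * #(S \ R) := by
  have hpairs : ({Q : Finset α | (#Q = 2 ∧ #(R ∩ Q) = 1) ∧ Q ⊆ S} : Finset _) =
      ((R ∩ S) ×ˢ (S \ R)).image fun p => {p.1, p.2} := by
    ext Q
    simp only [mem_filter, mem_univ, true_and, mem_image, mem_product, mem_inter, mem_sdiff,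
      Prod.exists]
    constructor
    · rintro ⟨⟨hQ2, hRQ⟩, hQS⟩
      obtain ⟨a, ha⟩ := card_eq_one.mp hRQ
      obtain ⟨b, hb⟩ : ∃ b, Q \ R = {b} := card_eq_one.mp <| by
        rw [card_sdiff, hQ2, hRQ]
      have haRQ : a ∈ R ∩ Q := ha ▸ mem_singleton_self a
      have hbQR : b ∈ Q \ R := hb ▸ mem_singleton_self b
      refine ⟨a, b, ⟨⟨(mem_inter.mp haRQ).1, hQS (mem_inter.mp haRQ).2⟩,
        hQS (mem_sdiff.mp hbQR).1, (mem_sdiff.mp hbQR).2⟩, ?_⟩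
      rw [← sdiff_union_inter Q R, hb, inter_comm, ha]
      exact (union_singleton a {b}).symm
    · rintro ⟨a, b, ⟨⟨haR, haS⟩, hbS, hbR⟩, rfl⟩
      refine ⟨⟨card_pair (ne_of_mem_of_not_mem haR hbR), ?_⟩, ?_⟩
      · rw [inter_pair_eq_singleton haR hbR, card_singleton]
      · exact insert_subset haS (singleton_subset_iff.mpr hbS)
  rw [hpairs, card_image_of_injOn, card_product]
  -- `a` and `b` are recovered from `{a, b}` as its part inside and its part outside `R`.
  rintro ⟨a, b⟩ hab ⟨a', b'⟩ hab' h
  simp only [coe_product, Set.mem_prod, mem_coe, mem_inter, mem_sdiff] at hab hab'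
  have ha := inter_pair_eq_singleton (R := R) hab.1.1 hab.2.2
  have hb := pair_sdiff_eq_singleton (R := R) hab.1.1 hab.2.2
  simp only at h
  rw [h, inter_pair_eq_singleton hab'.1.1 hab'.2.2, singleton_inj] at ha
  rw [h, pair_sdiff_eq_singleton hab'.1.1 hab'.2.2, singleton_inj] at hb
  rw [ha, hb]

end

theorem disjoint_from_pair_identity_general (n : ℕ) (x : Finset (Fin n) → ℝ)
    (R : Finset (Fin n)) (hR : R.card = 2) (k : ℕ) (hk : 2 ≤ k) :
    (∑ S ∈ Finset.univ.filter
        (fun S : Finset (Fin n) => S.card = k ∧ R ∩ S = ∅), x S)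
      = (1 / ((k : ℝ) * ((k : ℝ) - 1) / 2)) *
          ((∑ Q ∈ Finset.univ.filter
              (fun Q : Finset (Fin n) => Q.card = 2), yQ n k Q x)
            - ((k : ℝ) / 2) *
              (∑ Q ∈ Finset.univ.filter
                (fun Q : Finset (Fin n) => Q.card = 2 ∧ (R ∩ Q).card = 1),
                yQ n k Q x)
            + ((k : ℝ) * ((k : ℝ) - 3) / 2) * yQ n k R x) := by
  have hdisj : ∑ S ∈ univ.filter (fun S : Finset (Fin n) => #S = k ∧ R ∩ S = ∅), x S
      = ∑ S ∈ univ.filter (fun S : Finset (Fin n) => #S = k),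
          if R ∩ S = ∅ then x S else 0 := by
    rw [← filter_filter, sum_filter]
  have hyR : yQ n k R x = ∑ S ∈ univ.filter (fun S : Finset (Fin n) => #S = k),
      if R ⊆ S then x S else 0 := by
    rw [yQ, ← filter_filter, sum_filter]
  have hall : ∑ Q ∈ univ.filter (fun Q : Finset (Fin n) => #Q = 2), yQ n k Q x
      = ∑ S ∈ univ.filter (fun S : Finset (Fin n) => #S = k), (k.choose 2 : ℝ) * x S := by
    rw [sum_yQ_eq_sum_card_mul]
    refine sum_congr rfl fun S hS => ?_
    rw [card_filter_card_eq_two_subset, (mem_filter.mp hS).2]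
  have hone : ∑ Q ∈ univ.filter (fun Q : Finset (Fin n) => #Q = 2 ∧ #(R ∩ Q) = 1), yQ n k Q x
      = ∑ S ∈ univ.filter (fun S : Finset (Fin n) => #S = k),
          ((#(R ∩ S) * #(S \ R) : ℕ) : ℝ) * x S := by
    rw [sum_yQ_eq_sum_card_mul]
    simp only [card_filter_pair_inter_card_eq_one_subset]
  rw [hdisj, hall, hone, hyR, mul_sum, mul_sum, ← sum_sub_distrib, ← sum_add_distrib, mul_sum]
  exact sum_congr rfl fun S hS => 
    (weighted_counts_eq_ite_inter_eq_empty hR (mem_filter.mp hS).2 hk (x S)).symm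

theorem disjoint_from_pair_identity (n : ℕ) (x : Finset (Fin n) → ℝ)
    (R : Finset (Fin n)) (hR : R.card = 2) (k : ℕ) (hk : 2 ≤ k) (hkn : k ≤ n) :
    (∑ S ∈ Finset.univ.filter
        (fun S : Finset (Fin n) => S.card = k ∧ R ∩ S = ∅), x S)
      = (1 / ((k : ℝ) * ((k : ℝ) - 1) / 2)) *
          ((∑ Q ∈ Finset.univ.filter
              (fun Q : Finset (Fin n) => Q.card = 2), yQ n k Q x)
            - ((k : ℝ) / 2) *
              (∑ Q ∈ Finset.univ.filter
                (fun Q : Finset (Fin n) => Q.card = 2 ∧ (R ∩ Q).card = 1),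
                yQ n k Q x)
            + ((k : ℝ) * ((k : ℝ) - 3) / 2) * yQ n k R x) :=
  disjoint_from_pair_identity_general n x R hR k hk
end

section
/- For every i ∈ V, every 2-element set R ⊆ V with i ∈ R, and 2 ≤ k ≤ n, Σ_{|S|=k, R∩S={i}} x_S = (1/(k−1)) ( Σ_{Q∈Ω², Q∩R={i}} y^k_Q − (k−2)·y^k_R ). -/
open Finset

lemma inter_pair_eq_singleton_s10 (n : ℕ) (i j : Fin n) (hij : i ≠ j) (Q : Finset (Fin n)) :
    Q ∩ ({i,j} : Finset (Fin n)) = {i} ↔ i ∈ Q ∧ j ∉ Q := by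
  constructor
  · intro h
    refine ⟨?_, ?_⟩
    · have : i ∈ Q ∩ ({i,j} : Finset (Fin n)) := by rw [h]; simp
      exact (mem_inter.mp this).1
    · intro hj
      have : j ∈ Q ∩ ({i,j} : Finset (Fin n)) := by simp [hj]
      rw [h] at this; simp at this; exact hij this.symm
  · rintro ⟨h1, h2⟩
    ext a
    simp only [mem_inter, mem_insert, mem_singleton]
    constructor
    · rintro ⟨ha, rfl | rfl⟩
      · rfl
      · exact absurd ha h2
    · rintro rfl; exact ⟨h1, Or.inl rfl⟩

lemma count_lemma (n : ℕ) (i j : Fin n) (hij : i ≠ j) (S : Finset (Fin n)) (hiS : i ∈ S) :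
    (Finset.univ.filter (fun Q : Finset (Fin n) =>
        (Q.card = 2 ∧ Q ∩ ({i,j} : Finset (Fin n)) = {i}) ∧ Q ⊆ S))
      = (S \ {i,j}).image (fun q => ({i,q} : Finset (Fin n))) := by
  ext Q
  simp only [mem_filter, mem_univ, true_and, mem_image, mem_sdiff, mem_insert, mem_singleton,
    inter_pair_eq_singleton_s10 n i j hij]
  constructor
  · rintro ⟨⟨hc, hiQ, hjQ⟩, hQS⟩
    have h1 : (Q.erase i).card = 1 := by
      rw [card_erase_of_mem hiQ, hc]
    obtain ⟨q, hq⟩ := card_eq_one.mp h1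
    refine ⟨q, ⟨?_, ?_⟩, ?_⟩
    · have : q ∈ Q.erase i := by rw [hq]; simp
      exact hQS (mem_of_mem_erase this)
    · push_neg
      have hqQ : q ∈ Q := by
        have : q ∈ Q.erase i := by rw [hq]; simp
        exact mem_of_mem_erase this
      have hqi : q ≠ i := by
        have : q ∈ Q.erase i := by rw [hq]; simp
        exact ne_of_mem_erase this
      exact ⟨hqi, fun h => hjQ (h ▸ hqQ)⟩
    · rw [← insert_erase hiQ, hq]
  · rintro ⟨q, ⟨hqS, hq⟩, rfl⟩
    push_neg at hq
    refine ⟨⟨?_, by simp, ?_⟩, ?_⟩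
    · rw [card_insert_of_notMem (by simp [Ne.symm hq.1]), card_singleton]
    · simp only [mem_insert, mem_singleton]
      push_neg
      exact ⟨fun h => hij h.symm, fun h => hq.2 h.symm⟩
    · intro a ha
      simp only [mem_insert, mem_singleton] at ha
      rcases ha with rfl | rfl
      · exact hiS
      · exact hqS

lemma count_card (n : ℕ) (i j : Fin n) (hij : i ≠ j) (S : Finset (Fin n)) :
    (Finset.univ.filter (fun Q : Finset (Fin n) =>
        (Q.card = 2 ∧ Q ∩ ({i,j} : Finset (Fin n)) = {i}) ∧ Q ⊆ S)).card
      = if i ∈ S then (S \ {i,j}).card else 0 := by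
  by_cases hiS : i ∈ S
  · rw [if_pos hiS, count_lemma n i j hij S hiS]
    apply card_image_of_injOn
    intro q hq q' hq' h
    have h' : ({i, q} : Finset (Fin n)) = {i, q'} := h
    have : q ∈ ({i, q'} : Finset (Fin n)) := by rw [← h']; simp
    simp only [mem_insert, mem_singleton] at this
    rcases this with rfl | rfl
    · exact absurd (by simp : q ∈ ({q, j} : Finset (Fin n))) (mem_sdiff.mp (mem_coe.mp hq)).2
    · rfl
  · rw [if_neg hiS]
    rw [card_eq_zero, filter_eq_empty_iff]
    rintro Q _ ⟨⟨_, hQR⟩, hQS⟩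
    have hiQ : i ∈ Q := ((inter_pair_eq_singleton_s10 n i j hij Q).mp hQR).1
    exact hiS (hQS hiQ)

lemma pair_aux (n : ℕ) (x : Finset (Fin n) → ℝ) (i j : Fin n) (hij : i ≠ j)
    (k : ℕ) (hk : 2 ≤ k) :
    (∑ S ∈ Finset.univ.filter
        (fun S : Finset (Fin n) => S.card = k ∧ ({i,j} : Finset (Fin n)) ∩ S = {i}), x S)
      = (1 / ((k : ℝ) - 1)) *
          ((∑ Q ∈ Finset.univ.filter
              (fun Q : Finset (Fin n) => Q.card = 2 ∧ Q ∩ ({i,j} : Finset (Fin n)) = {i}),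
              yQ n k Q x)
            - ((k : ℝ) - 2) * yQ n k ({i,j} : Finset (Fin n)) x) := by
  classical
  set T := Finset.univ.filter (fun S : Finset (Fin n) => S.card = k) with hT
  have hk1 : ((k : ℝ) - 1) ≠ 0 := by
    have : (2:ℝ) ≤ (k:ℝ) := by exact_mod_cast hk
    linarith
  -- A and B
  set A : ℝ := ∑ S ∈ T.filter (fun S => i ∈ S ∧ j ∉ S), x S with hA
  set B : ℝ := ∑ S ∈ T.filter (fun S => i ∈ S ∧ j ∈ S), x S with hB
  -- LHS = A
  have hLHS : (∑ S ∈ Finset.univ.filter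
        (fun S : Finset (Fin n) => S.card = k ∧ ({i,j} : Finset (Fin n)) ∩ S = {i}), x S) = A := by
    rw [hA, hT, filter_filter]
    apply sum_congr _ (fun _ _ => rfl)
    apply filter_congr
    intro S _
    rw [inter_comm, inter_pair_eq_singleton_s10 n i j hij]
  -- yQ {i,j} = B
  have hyR : yQ n k ({i,j} : Finset (Fin n)) x = B := by
    rw [hB, hT, filter_filter, yQ]
    apply sum_congr _ (fun _ _ => rfl)
    apply filter_congr
    intro S _
    simp [insert_subset_iff]
  -- double counting
  have hDC : (∑ Q ∈ Finset.univ.filter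
      (fun Q : Finset (Fin n) => Q.card = 2 ∧ Q ∩ ({i,j} : Finset (Fin n)) = {i}),
      yQ n k Q x) = ((k : ℝ) - 1) * A + ((k : ℝ) - 2) * B := by
    have step1 : ∀ Q : Finset (Fin n), yQ n k Q x = ∑ S ∈ T, if Q ⊆ S then x S else 0 := by
      intro Q
      rw [yQ, ← sum_filter, hT, filter_filter]
    simp_rw [step1]
    rw [sum_comm]
    have step2 : ∀ S ∈ T,
        (∑ Q ∈ Finset.univ.filter
          (fun Q : Finset (Fin n) => Q.card = 2 ∧ Q ∩ ({i,j} : Finset (Fin n)) = {i}),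
          if Q ⊆ S then x S else 0)
        = ((k:ℝ) - 1) * (if i ∈ S ∧ j ∉ S then x S else 0)
          + ((k:ℝ) - 2) * (if i ∈ S ∧ j ∈ S then x S else 0) := by
      intro S hS
      have hSk : S.card = k := by
        rw [hT, mem_filter] at hS; exact hS.2
      rw [← sum_filter, sum_const, filter_filter, count_card n i j hij S]
      by_cases hiS : i ∈ S
      · rw [if_pos hiS]
        by_cases hjS : j ∈ S
        · have hcd : (S \ ({i,j} : Finset (Fin n))).card = k - 2 := by
            have : S \ ({i,j} : Finset (Fin n)) = (S.erase j).erase i := by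
              rw [show ({i,j} : Finset (Fin n)) = insert i {j} from rfl]
              rw [sdiff_insert, sdiff_singleton_eq_erase]
            rw [this, card_erase_of_mem (mem_erase.mpr ⟨hij, hiS⟩),
              card_erase_of_mem hjS, hSk]
            omega
          rw [hcd, if_neg (by tauto), if_pos ⟨hiS, hjS⟩, nsmul_eq_mul]
          have : ((k - 2 : ℕ) : ℝ) = (k:ℝ) - 2 := by
            rw [Nat.cast_sub hk]; norm_num
          rw [this]; ring
        · have hcd : (S \ ({i,j} : Finset (Fin n))).card = k - 1 := by
            have : S \ ({i,j} : Finset (Fin n)) = S.erase i := by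
              rw [show ({i,j} : Finset (Fin n)) = insert i {j} from rfl]
              rw [sdiff_insert, sdiff_singleton_eq_erase, erase_eq_of_notMem hjS]
            rw [this, card_erase_of_mem hiS, hSk]
          rw [hcd, if_pos ⟨hiS, hjS⟩, if_neg (by tauto), nsmul_eq_mul]
          have : ((k - 1 : ℕ) : ℝ) = (k:ℝ) - 1 := by
            rw [Nat.cast_sub (by omega)]; norm_num
          rw [this]; ring
      · rw [if_neg hiS, if_neg (by tauto), if_neg (by tauto), zero_smul]
        ring
    rw [sum_congr rfl step2, sum_add_distrib, ← mul_sum, ← mul_sum,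
      ← sum_filter, ← sum_filter, ← hA, ← hB]
  rw [hLHS, hyR, hDC]
  field_simp
  ring

theorem pair_meet_singleton_identity (n : ℕ) (x : Finset (Fin n) → ℝ)
    (i : Fin n) (R : Finset (Fin n)) (hR : R.card = 2) (hiR : i ∈ R)
    (k : ℕ) (hk : 2 ≤ k) (hkn : k ≤ n) :
    (∑ S ∈ Finset.univ.filter
        (fun S : Finset (Fin n) => S.card = k ∧ R ∩ S = {i}), x S)
      = (1 / ((k : ℝ) - 1)) *
          ((∑ Q ∈ Finset.univ.filter
              (fun Q : Finset (Fin n) => Q.card = 2 ∧ Q ∩ R = {i}),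
              yQ n k Q x)
            - ((k : ℝ) - 2) * yQ n k R x) := by
  classical
  obtain ⟨a, b, hab, rfl⟩ := Finset.card_eq_two.mp hR
  simp only [mem_insert, mem_singleton] at hiR
  rcases hiR with rfl | rfl
  · exact pair_aux n x i b hab k hk
  · rw [pair_comm a i]
    exact pair_aux n x i a (Ne.symm hab) k hk
end

section
/- For every 3-element set R ⊆ V and 2 ≤ k ≤ n, Σ_{|S|=k, |R∩S|∈{0,3}} x_S = (1/C(k,2)) Σ_{Q∈Ω²} y^k_Q − (1/(k−1)) Σ_{Q∈Ω², |R∩Q|=1} y^k_Q + ((k−3)/(k−1)) Σ_{Q∈Ω², Q⊆R} y^k_Q. -/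
open Finset

lemma sum_yQ (n k : ℕ) (x : Finset (Fin n) → ℝ) (p : Finset (Fin n) → Prop)
    [DecidablePred p] :
    (∑ Q ∈ Finset.univ.filter p, yQ n k Q x)
      = ∑ S ∈ Finset.univ.filter (fun S : Finset (Fin n) => S.card = k),
          ((Finset.univ.filter (fun Q : Finset (Fin n) => p Q ∧ Q ⊆ S)).card : ℝ) * x S := by
  unfold yQ
  rw [Finset.sum_comm' (t' := Finset.univ.filter (fun S : Finset (Fin n) => S.card = k))
      (s' := fun S => Finset.univ.filter (fun Q : Finset (Fin n) => p Q ∧ Q ⊆ S))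
      (by intro Q S; simp; tauto)]
  refine Finset.sum_congr rfl fun S _ => ?_
  rw [Finset.sum_const, nsmul_eq_mul]

set_option maxHeartbeats 1000000 in
theorem triple_all_or_none_identity (n : ℕ) (x : Finset (Fin n) → ℝ)
    (R : Finset (Fin n)) (hR : R.card = 3) (k : ℕ) (hk : 2 ≤ k) (hkn : k ≤ n) :
    (∑ S ∈ Finset.univ.filter
        (fun S : Finset (Fin n) => S.card = k ∧ ((R ∩ S).card = 0 ∨ (R ∩ S).card = 3)), x S)
      = (1 / ((k : ℝ) * ((k : ℝ) - 1) / 2)) *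
          (∑ Q ∈ Finset.univ.filter
              (fun Q : Finset (Fin n) => Q.card = 2), yQ n k Q x)
        - (1 / ((k : ℝ) - 1)) *
          (∑ Q ∈ Finset.univ.filter
              (fun Q : Finset (Fin n) => Q.card = 2 ∧ (R ∩ Q).card = 1), yQ n k Q x)
        + (((k : ℝ) - 3) / ((k : ℝ) - 1)) *
          (∑ Q ∈ Finset.univ.filter
              (fun Q : Finset (Fin n) => Q.card = 2 ∧ Q ⊆ R), yQ n k Q x) := by
  rw [sum_yQ, sum_yQ, sum_yQ, Finset.mul_sum, Finset.mul_sum, Finset.mul_sum,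
    ← Finset.sum_sub_distrib, ← Finset.sum_add_distrib]
  have hLHS : (Finset.univ.filter
      (fun S : Finset (Fin n) => S.card = k ∧ ((R ∩ S).card = 0 ∨ (R ∩ S).card = 3)))
      = (Finset.univ.filter (fun S : Finset (Fin n) => S.card = k)).filter
          (fun S => (R ∩ S).card = 0 ∨ (R ∩ S).card = 3) := by
    rw [Finset.filter_filter]
  rw [hLHS, Finset.sum_filter]
  refine Finset.sum_congr rfl fun S hS => ?_
  rw [Finset.mem_filter] at hS
  obtain ⟨-, hSk⟩ := hS
  -- basic cardinality facts
  have hrS : (R ∩ S).card ≤ k := hSk ▸ Finset.card_le_card Finset.inter_subset_right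
  have hr3 : (R ∩ S).card ≤ 3 := hR ▸ Finset.card_le_card Finset.inter_subset_left
  -- count of all 2-subsets of S
  have hA : (Finset.univ.filter (fun Q : Finset (Fin n) => Q.card = 2 ∧ Q ⊆ S))
      = S.powersetCard 2 := by
    ext Q; simp [Finset.mem_powersetCard, and_comm]
  -- count of 2-subsets of S contained in R
  have hC : (Finset.univ.filter (fun Q : Finset (Fin n) => (Q.card = 2 ∧ Q ⊆ R) ∧ Q ⊆ S))
      = (R ∩ S).powersetCard 2 := by
    ext Q; simp [Finset.mem_powersetCard, Finset.subset_inter_iff]; tauto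
  -- partition the 2-subsets of S according to (R ∩ Q).card
  let A := Finset.univ.filter (fun Q : Finset (Fin n) => Q.card = 2 ∧ Q ⊆ S)
  have hAdef : A = Finset.univ.filter (fun Q : Finset (Fin n) => Q.card = 2 ∧ Q ⊆ S) := rfl
  have hsplit0 : (A.filter (fun Q => (R ∩ Q).card = 0)).card
      + (A.filter (fun Q => ¬ (R ∩ Q).card = 0)).card = A.card :=
    Finset.card_filter_add_card_filter_not _
  have hsplit1 : ((A.filter (fun Q => ¬ (R ∩ Q).card = 0)).filter
        (fun Q => (R ∩ Q).card = 1)).card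
      + ((A.filter (fun Q => ¬ (R ∩ Q).card = 0)).filter
        (fun Q => ¬ (R ∩ Q).card = 1)).card
      = (A.filter (fun Q => ¬ (R ∩ Q).card = 0)).card :=
    Finset.card_filter_add_card_filter_not _
  have h0 : A.filter (fun Q => (R ∩ Q).card = 0) = (S \ R).powersetCard 2 := by
    ext Q
    simp only [hAdef, Finset.mem_filter, Finset.mem_univ, true_and,
      Finset.mem_powersetCard, Finset.card_eq_zero, Finset.subset_sdiff,
      ← Finset.disjoint_iff_inter_eq_empty]
    rw [disjoint_comm]; tauto
  have h1 : (A.filter (fun Q => ¬ (R ∩ Q).card = 0)).filter (fun Q => (R ∩ Q).card = 1)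
      = Finset.univ.filter
          (fun Q : Finset (Fin n) => (Q.card = 2 ∧ (R ∩ Q).card = 1) ∧ Q ⊆ S) := by
    ext Q
    simp only [hAdef, Finset.mem_filter, Finset.mem_univ, true_and]
    constructor
    · rintro ⟨⟨⟨h2, hs⟩, -⟩, h1⟩; exact ⟨⟨h2, h1⟩, hs⟩
    · rintro ⟨⟨h2, h1⟩, hs⟩; exact ⟨⟨⟨h2, hs⟩, by omega⟩, h1⟩
  have h2 : (A.filter (fun Q => ¬ (R ∩ Q).card = 0)).filter (fun Q => ¬ (R ∩ Q).card = 1)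
      = (R ∩ S).powersetCard 2 := by
    ext Q
    simp only [hAdef, Finset.mem_filter, Finset.mem_univ, true_and,
      Finset.mem_powersetCard, Finset.subset_inter_iff]
    constructor
    · rintro ⟨⟨⟨h2, hs⟩, hne0⟩, hne1⟩
      have hle : (R ∩ Q).card ≤ 2 := h2 ▸ Finset.card_le_card Finset.inter_subset_right
      have heq2 : (R ∩ Q).card = 2 := by omega
      have heq : R ∩ Q = Q :=
        Finset.eq_of_subset_of_card_le Finset.inter_subset_right (by omega)
      exact ⟨⟨Finset.inter_eq_right.mp heq, hs⟩, h2⟩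
    · rintro ⟨⟨hQR, hQS⟩, h2⟩
      have heq : R ∩ Q = Q := Finset.inter_eq_right.mpr hQR
      rw [heq]
      exact ⟨⟨⟨h2, hQS⟩, by omega⟩, by omega⟩
  -- cardinalities
  have hsR : (S \ R).card + (R ∩ S).card = k := by
    rw [Finset.inter_comm, ← hSk]
    exact Finset.card_sdiff_add_card_inter S R
  have hAcard : A.card = Nat.choose k 2 := by
    rw [hAdef]; rw [hA, Finset.card_powersetCard, hSk]
  have hCcard : (Finset.univ.filter
      (fun Q : Finset (Fin n) => (Q.card = 2 ∧ Q ⊆ R) ∧ Q ⊆ S)).card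
      = Nat.choose (R ∩ S).card 2 := by
    rw [hC, Finset.card_powersetCard]
  have h0card : (A.filter (fun Q => (R ∩ Q).card = 0)).card
      = Nat.choose (k - (R ∩ S).card) 2 := by
    rw [h0, Finset.card_powersetCard]
    congr 1
    omega
  have h2card : ((A.filter (fun Q => ¬ (R ∩ Q).card = 0)).filter
      (fun Q => ¬ (R ∩ Q).card = 1)).card = Nat.choose (R ∩ S).card 2 := by
    rw [h2, Finset.card_powersetCard]
  -- partition equation
  have hpart : Nat.choose (k - (R ∩ S).card) 2
      + (Finset.univ.filter
          (fun Q : Finset (Fin n) => (Q.card = 2 ∧ (R ∩ Q).card = 1) ∧ Q ⊆ S)).card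
      + Nat.choose (R ∩ S).card 2 = Nat.choose k 2 := by
    rw [← h0card, ← h1, ← h2card, ← hAcard]
    omega
  rw [hAcard, hCcard]
  -- now a purely real computation
  have hkR : (2 : ℝ) ≤ (k : ℝ) := by exact_mod_cast hk
  have hk0 : (k : ℝ) ≠ 0 := by positivity
  have hk1 : (k : ℝ) - 1 ≠ 0 := by intro h; nlinarith
  have hcases : (R ∩ S).card = 0 ∨ (R ∩ S).card = 1 ∨ (R ∩ S).card = 2
      ∨ (R ∩ S).card = 3 := by omega
  have hcast : ∀ m : ℕ, m ≤ k → ((k - m : ℕ) : ℝ) = (k : ℝ) - (m : ℝ) := by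
    intro m hm
    push_cast [hm]
    ring
  rcases hcases with hr | hr | hr | hr
  · rw [hr] at hpart ⊢
    rw [if_pos (Or.inl rfl)]
    have hc : ((Finset.univ.filter
        (fun Q : Finset (Fin n) => (Q.card = 2 ∧ (R ∩ Q).card = 1) ∧ Q ⊆ S)).card : ℝ)
        = 0 := by
      have : Nat.choose (k - 0) 2 = Nat.choose k 2 := by norm_num
      rw [this] at hpart
      have : (Finset.univ.filter
          (fun Q : Finset (Fin n) => (Q.card = 2 ∧ (R ∩ Q).card = 1) ∧ Q ⊆ S)).card = 0 := by
        have h02 : Nat.choose 0 2 = 0 := rfl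
        omega
      rw [this]; norm_num
    rw [hc, Nat.cast_choose_two]
    norm_num
    field_simp
  · rw [hr] at hpart ⊢
    rw [if_neg (by omega)]
    have hpR := congrArg (Nat.cast : ℕ → ℝ) hpart
    push_cast [Nat.cast_choose_two] at hpR
    rw [hcast 1 (by omega)] at hpR
    have hc : ((Finset.univ.filter
        (fun Q : Finset (Fin n) => (Q.card = 2 ∧ (R ∩ Q).card = 1) ∧ Q ⊆ S)).card : ℝ)
        = (k : ℝ) * ((k : ℝ) - 1) / 2 - ((k : ℝ) - 1) * ((k : ℝ) - 1 - 1) / 2 := by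
      push_cast at hpR
      linarith
    rw [hc, Nat.cast_choose_two]
    push_cast
    field_simp
    rw [Nat.choose_eq_zero_of_lt (show 1 < 2 by norm_num)]
    ring
  · rw [hr] at hpart ⊢
    rw [if_neg (by omega)]
    have hpR := congrArg (Nat.cast : ℕ → ℝ) hpart
    push_cast [Nat.cast_choose_two] at hpR
    rw [hcast 2 (by omega)] at hpR
    have hc : ((Finset.univ.filter
        (fun Q : Finset (Fin n) => (Q.card = 2 ∧ (R ∩ Q).card = 1) ∧ Q ⊆ S)).card : ℝ)
        = (k : ℝ) * ((k : ℝ) - 1) / 2 - ((k : ℝ) - 2) * ((k : ℝ) - 2 - 1) / 2 - 1 := by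
      push_cast at hpR
      linarith
    rw [hc, Nat.cast_choose_two]
    push_cast
    field_simp
    rw [Nat.choose_self]
    ring
  · have hk3 : 3 ≤ k := by omega
    rw [hr] at hpart ⊢
    rw [if_pos (Or.inr rfl)]
    have hpR := congrArg (Nat.cast : ℕ → ℝ) hpart
    push_cast [Nat.cast_choose_two] at hpR
    rw [hcast 3 hk3] at hpR
    have hc : ((Finset.univ.filter
        (fun Q : Finset (Fin n) => (Q.card = 2 ∧ (R ∩ Q).card = 1) ∧ Q ⊆ S)).card : ℝ)
        = (k : ℝ) * ((k : ℝ) - 1) / 2 - ((k : ℝ) - 3) * ((k : ℝ) - 3 - 1) / 2 - 3 := by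
      push_cast at hpR
      linarith
    rw [hc, Nat.cast_choose_two]
    norm_num
    field_simp
    ring
end
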